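/- Let U : C → C be an endofunctor, and suppose the induced functor Û : Comma(1_C, 1_C) → Comma(1_C, U), sending (X, f : X → Y, Y) to (U X, U f : U X → U Y, Y) and (u, v) to (U u, v), has a left adjoint F̂. Let G be a dense full subcategory of C with inclusion inducing j : Comma(G, U) → Comma(1_C, U). Then U is the pointwise left Kan extension of dom ∘ j along dom ∘ F̂ ∘ j, where dom denotes the domain projection functors of the respective comma categories. -/

import Mathlib

/-!
Pointwise left Kan extensions can be pulled back along Guitart exact squares
(`IsPointwiseLeftKanExtension.compTwoSquare`). By density, `𝟭 C` is a pointwise left Kan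
extension of `ι` along itself, so it is enough that the square with sides `Comma.fst ι U`,
`dom ∘ F̂ ∘ j`, `ι`, `U`, whose 2-cell is the unit of `F̂ ⊣ Û`, is exact. It is the vertical
pasting of three exact squares, each shown exact by connecting every object of the relevant
category of factorisations to a canonical one: the square of `j` over `ι` (by a span through the
object reindexed along the map out of `ι A`), the unit of the adjunction followed by `dom` (by the
adjoint transpose), and `dom ∘ Û = U ∘ dom` (by a span through the section `Y ↦ (Y, 𝟙 Y, Y)` of
`dom`).
-/

open CategoryTheory Limits

universe v u₁ u₂

variable {C : Type u₁} [Category.{v} C]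

/-- The canonical cocone on the diagram of all morphisms from objects of the subcategory
(along `ι`) into `X`, with apex `X`. -/
@[simps]
def canonicalCocone {G : Type u₁} [Category.{v} G] (ι : G ⥤ C) (X : C) :
    Cocone (CostructuredArrow.proj ι X ⋙ ι) where
  pt := X
  ι := { app := fun g => g.hom
         naturality := fun _ _ f => by erw [Category.comp_id]; exact CostructuredArrow.w f }

/-- `ι` is dense if every object of `C` is the colimit of the canonical diagram of
morphisms from objects of the subcategory into it. -/
def IsDense {G : Type u₁} [Category.{v} G] (ι : G ⥤ C) : Prop :=
  ∀ X : C, Nonempty (IsColimit (canonicalCocone ι X))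

/-- The inclusion `j : Comma ι U ⥤ Comma (𝟭 C) U` induced by `ι : G ⥤ C`. -/
@[simps]
def commaIncl {G : Type u₁} [Category.{v} G] {D : Type u₂} [Category.{v} D]
    (ι : G ⥤ C) (U : D ⥤ C) : Comma ι U ⥤ Comma (𝟭 C) U where
  obj p := { left := ι.obj p.left, right := p.right, hom := p.hom }
  map φ := { left := ι.map φ.left, right := φ.right, w := by simp [φ.w] }

/-- The functor `Û : Comma (𝟭 C) (𝟭 C) ⥤ Comma (𝟭 C) U` induced by an endofunctor
`U : C ⥤ C`, sending `(X, f : X ⟶ Y, Y)` to `(U X, U f : U X ⟶ U Y, Y)`. -/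
@[simps]
def commaLift (U : C ⥤ C) : Comma (𝟭 C) (𝟭 C) ⥤ Comma (𝟭 C) U where
  obj f := { left := U.obj f.left, right := f.right, hom := U.map f.hom }
  map φ :=
    { left := U.map φ.left
      right := φ.right
      w := by
        simp only [Functor.id_obj, Functor.id_map, ← U.map_comp]
        congr 1
        simpa using φ.w }

/-- The unit of the extension in Proposition 1: at `p : Comma ι U`, the left component of
the unit of the adjunction `F̂ ⊣ Û` at `j.obj p`. -/
@[simps]
def prop1Unit {G : Type u₁} [Category.{v} G] (ι : G ⥤ C) (U : C ⥤ C)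
    (Fhat : Comma (𝟭 C) U ⥤ Comma (𝟭 C) (𝟭 C)) (adj : Fhat ⊣ commaLift U) :
    commaIncl ι U ⋙ Comma.fst (𝟭 C) U ⟶
      (commaIncl ι U ⋙ Fhat ⋙ Comma.fst (𝟭 C) (𝟭 C)) ⋙ U where
  app p := (adj.unit.app ((commaIncl ι U).obj p)).left
  naturality p q φ := by
    have h := congrArg CommaMorphism.left (adj.unit.naturality ((commaIncl ι U).map φ))
    simp only [Comma.comp_left] at h
    exact h

namespace CategoryTheory

lemma isConnected_of_zigzag_to {J : Type*} [Category J] (j₀ : J) (h : ∀ j, Zigzag j j₀) :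
    IsConnected J :=
  have : Nonempty J := ⟨j₀⟩
  zigzag_isConnected fun j₁ j₂ => (h j₁).trans (h j₂).symm

namespace TwoSquare

section

variable {C₁ C₂ C₃ C₄ : Type*} [Category C₁] [Category C₂] [Category C₃] [Category C₄]
  {T : C₁ ⥤ C₂} {L : C₁ ⥤ C₃} {R : C₂ ⥤ C₄} {B : C₃ ⥤ C₄} {w : TwoSquare T L R B}
  {X₂ : C₂} {X₃ : C₃} {g : R.obj X₂ ⟶ B.obj X₃}

def StructuredArrowRightwards.homMk {X₁ X₁' : C₁} {a : X₂ ⟶ T.obj X₁} {a' : X₂ ⟶ T.obj X₁'}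
    {b : L.obj X₁ ⟶ X₃} {b' : L.obj X₁' ⟶ X₃} (comm : R.map a ≫ w.app X₁ ≫ B.map b = g)
    (comm' : R.map a' ≫ w.app X₁' ≫ B.map b' = g) (φ : X₁ ⟶ X₁')
    (ha : a ≫ T.map φ = a') (hb : L.map φ ≫ b' = b) :
    StructuredArrowRightwards.mk w g X₁ a b comm ⟶
      StructuredArrowRightwards.mk w g X₁' a' b' comm' :=
  StructuredArrow.homMk (CostructuredArrow.homMk φ hb) (by ext; exact ha)

end

variable {A B X : Type*} [Category A] [Category B] [Category X]

def unitSquare {F : A ⥤ B} {G : B ⥤ A} (adj : F ⊣ G) (P : A ⥤ X) :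
    TwoSquare P F (𝟭 X) (G ⋙ P) :=
  Functor.whiskerRight adj.unit P

instance guitartExact_unitSquare {F : A ⥤ B} {G : B ⥤ A} (adj : F ⊣ G) (P : A ⥤ X) :
    (unitSquare adj P).GuitartExact := by
  rw [guitartExact_iff_isConnected_rightwards]
  intro X₂ X₃ g
  refine isConnected_of_zigzag_to
    (StructuredArrowRightwards.mk _ g (G.obj X₃) g (adj.counit.app X₃)
      (by simp [unitSquare, ← P.map_comp])) fun Z => ?_
  obtain ⟨X₁, a, b, comm, rfl⟩ := StructuredArrowRightwards.mk_surjective Z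
  refine Zigzag.of_hom (StructuredArrowRightwards.homMk comm _ (adj.homEquiv _ _ b) ?_ ?_)
  · simpa [unitSquare, Adjunction.homEquiv_unit] using comm
  · simp [Adjunction.homEquiv_unit]

def fstSquare (U : A ⥤ B) :
    TwoSquare (Comma.fst (𝟭 A) (𝟭 A) ⋙ U) (Comma.fst (𝟭 A) (𝟭 A)) (𝟭 B) U :=
  𝟙 _

instance guitartExact_fstSquare (U : A ⥤ B) : (fstSquare U).GuitartExact := by
  rw [guitartExact_iff_isConnected_rightwards]
  intro X₂ X₃ (g : X₂ ⟶ U.obj X₃)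
  refine isConnected_of_zigzag_to
    (StructuredArrowRightwards.mk (fstSquare U) g ⟨X₃, X₃, 𝟙 X₃⟩ g (𝟙 X₃)
      (by simp [fstSquare, Comma.fst])) fun Z => ?_
  obtain ⟨f, a, b, comm, rfl⟩ := StructuredArrowRightwards.mk_surjective Z
  -- both `f` and the identity on `X₃` are reached from the identity on `f.left`
  refine Zigzag.of_inv_hom
    (StructuredArrowRightwards.homMk (X₁ := ⟨f.left, f.left, 𝟙 f.left⟩) comm _
      ⟨𝟙 f.left, f.hom, ?_⟩ ?_ ?_)
    (StructuredArrowRightwards.homMk _ _ ⟨b, b, ?_⟩ (by simpa [Comma.fst, fstSquare] using comm) ?_)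
  all_goals simp [Comma.fst]

end TwoSquare

end CategoryTheory

open TwoSquare

def commaInclSquare {G : Type u₁} [Category.{v} G] {D : Type u₂} [Category.{v} D]
    (ι : G ⥤ C) (U : D ⥤ C) :
    TwoSquare (Comma.fst ι U) (commaIncl ι U) ι (Comma.fst (𝟭 C) U) :=
  𝟙 _

instance guitartExact_commaInclSquare {G : Type u₁} [Category.{v} G] {D : Type u₂}
    [Category.{v} D] (ι : G ⥤ C) (U : D ⥤ C) : (commaInclSquare ι U).GuitartExact := by
  rw [guitartExact_iff_isConnected_rightwards]
  intro X₂ X₃ (g : ι.obj X₂ ⟶ X₃.left)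
  refine isConnected_of_zigzag_to
    (StructuredArrowRightwards.mk (commaInclSquare ι U) g ⟨X₂, X₃.right, g ≫ X₃.hom⟩ (𝟙 X₂)
      ⟨g, 𝟙 X₃.right, by simp [commaIncl]⟩ (by simp [commaInclSquare, Comma.fst, commaIncl]))
    fun Z => ?_
  obtain ⟨c, a, b, comm, rfl⟩ := StructuredArrowRightwards.mk_surjective Z
  have hab : ι.map a ≫ b.left = g := by simpa [commaInclSquare, Comma.fst, commaIncl] using comm
  -- apex of the span joining `c` to the canonical object
  let c' : Comma ι U := ⟨X₂, c.right, ι.map a ≫ c.hom⟩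
  let b' : (commaIncl ι U).obj c' ⟶ X₃ :=
    ⟨g, b.right, by simpa [c', ← hab, Comma.fst, commaIncl] using ι.map a ≫= b.w⟩
  let φ : c' ⟶ c := ⟨a, 𝟙 c.right, by simp [c']⟩
  have hb' : (commaIncl ι U).map φ ≫ b = b' := by
    ext
    · erw [Comma.comp_left]
      exact hab
    · erw [Comma.comp_right]
      exact Category.id_comp _
  refine Zigzag.of_inv_hom
    (StructuredArrowRightwards.homMk (a := 𝟙 X₂) ?_ _ φ ?_ hb')
    (StructuredArrowRightwards.homMk _ _ ⟨𝟙 X₂, b.right, ?_⟩ ?_ ?_)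
  all_goals simp [Comma.fst, commaIncl, commaInclSquare, c', b', φ]
  · rw [← hab]
    exact (Category.assoc _ _ _).trans (ι.map a ≫= b.w)
  · ext <;> simp

lemma IsDense.functor_isDense {G : Type u₁} [Category.{v} G] {ι : G ⥤ C} (h : IsDense ι) :
    ι.IsDense :=
  ⟨fun X => ⟨(h X).some.ofIsoColimit (Cocone.ext (Iso.refl _)
    fun _ => (Category.comp_id _).trans (Category.id_comp _).symm)⟩⟩

section

variable {G : Type u₁} [Category.{v} G] (ι : G ⥤ C) (U : C ⥤ C)
  (Fhat : Comma (𝟭 C) U ⥤ Comma (𝟭 C) (𝟭 C)) (adj : Fhat ⊣ commaLift U)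

def prop1Square :
    TwoSquare (Comma.fst ι U) (commaIncl ι U ⋙ Fhat ⋙ Comma.fst (𝟭 C) (𝟭 C)) ι U :=
  commaInclSquare ι U ≫ᵥ unitSquare adj (Comma.fst (𝟭 C) U) ≫ᵥ fstSquare U

instance guitartExact_prop1Square : (prop1Square ι U Fhat adj).GuitartExact := by
  -- instance search does not see that `commaLift U ⋙ Comma.fst _ _` is `Comma.fst _ _ ⋙ U`
  have : (fstSquare U).GuitartExact (T := commaLift U ⋙ Comma.fst (𝟭 C) U) :=
    guitartExact_fstSquare U
  have : (unitSquare adj (Comma.fst (𝟭 C) U) ≫ᵥ fstSquare U).GuitartExact :=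
    GuitartExact.vComp _ _
  exact GuitartExact.vComp _ _

lemma prop1Square_app (p : Comma ι U) :
    (prop1Square ι U Fhat adj).natTrans.app p = (adj.unit.app ((commaIncl ι U).obj p)).left := by
  erw [prop1Square, vComp_app, vComp_app]
  simp only [commaInclSquare, unitSquare, fstSquare, NatTrans.id_app, Functor.whiskerRight_app]
  exact (Category.id_comp _).trans (Category.comp_id _)

def prop1ExtensionIso :
    (Functor.LeftExtension.mk (𝟭 C) ι.rightUnitor.inv).compTwoSquare (prop1Square ι U Fhat adj) ≅
      Functor.LeftExtension.mk U (prop1Unit ι U Fhat adj) :=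
  StructuredArrow.isoMk (Iso.refl U) (by
    ext p
    change (𝟙 _ ≫ 𝟙 _ ≫ (prop1Square ι U Fhat adj).natTrans.app p ≫ 𝟙 _) ≫ 𝟙 _ =
      (adj.unit.app ((commaIncl ι U).obj p)).left
    rw [prop1Square_app]
    simp only [Category.id_comp, Category.comp_id]
    apply Category.comp_id)

end

theorem prop1_pointwiseLeftKanExtension_general
    {G : Type u₁} [Category.{v} G] (ι : G ⥤ C)
    (hdense : IsDense ι) (U : C ⥤ C)
    (Fhat : Comma (𝟭 C) U ⥤ Comma (𝟭 C) (𝟭 C)) (adj : Fhat ⊣ commaLift U) :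
    Nonempty ((Functor.LeftExtension.mk U
      (prop1Unit ι U Fhat adj)).IsPointwiseLeftKanExtension) := by
  obtain ⟨hι⟩ :=
    (Functor.isDense_iff_nonempty_isPointwiseLeftKanExtension ι).1 hdense.functor_isDense
  exact ⟨Functor.LeftExtension.isPointwiseLeftKanExtensionEquivOfIso
    (prop1ExtensionIso ι U Fhat adj) (hι.compTwoSquare _)⟩

/-- Proposition 1: if `U : C ⥤ C` is an endofunctor such that the induced functor
`Û : Comma (𝟭 C) (𝟭 C) ⥤ Comma (𝟭 C) U` has a left adjoint `F̂`, and `ι : G ⥤ C` is a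
dense full subcategory inclusion, then `U` is the pointwise left Kan extension of
`dom ∘ j` along `dom ∘ F̂ ∘ j`, with unit induced by the unit of the adjunction. -/
theorem prop1_pointwiseLeftKanExtension
    {G : Type u₁} [Category.{v} G] (ι : G ⥤ C) [ι.Full] [ι.Faithful]
    (hdense : IsDense ι) (U : C ⥤ C)
    (Fhat : Comma (𝟭 C) U ⥤ Comma (𝟭 C) (𝟭 C)) (adj : Fhat ⊣ commaLift U) :
    Nonempty ((Functor.LeftExtension.mk U
      (prop1Unit ι U Fhat adj)).IsPointwiseLeftKanExtension) :=
  prop1_pointwiseLeftKanExtension_general ι hdense U Fhat adj
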